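/- arXiv:1508.03518 — 6 statements merged into one kernel-verified Lean document; each statement's English description precedes it below -/
import Mathlib

section
/- Let X be a smooth Banach space and Y = ker f a hyperplane in X with f of norm 1. Suppose P(x) = x - f(x)·w, with f(w) = 1, is a projection of norm 1 from X onto Y. Then f_y(w) = 0 for every nonzero y ∈ Y, where f_y denotes the unique norm-one supporting functional of y (i.e. ‖f_y‖ = 1 and f_y(y) = ‖y‖). -/
/-!
`fy ∘ P` has norm at most `1` and, since `P` fixes `y ∈ ker f`, takes the value `‖y‖` at `y`;
so it is a supporting functional of `y` and by smoothness equals `fy`. Hence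
`fy w = fy (P w) = fy 0 = 0`.
-/

namespace ContinuousLinearMap

variable {E : Type*} [NormedAddCommGroup E] [NormedSpace ℝ E]

lemma norm_eq_one_of_norm_le_one_of_apply_eq_norm {g : E →L[ℝ] ℝ} {x : E} (hx : x ≠ 0)
    (hg : ‖g‖ ≤ 1) (hgx : g x = ‖x‖) : ‖g‖ = 1 := by
  refine le_antisymm hg ?_
  have hbound := g.le_opNorm x
  rw [hgx, norm_norm] at hbound
  exact (le_mul_iff_one_le_left (norm_pos_iff.mpr hx)).mp hbound

lemma comp_eq_self_of_existsUnique_supporting {x : E} (hx : x ≠ 0)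
    (huniq : ∃! g : E →L[ℝ] ℝ, ‖g‖ = 1 ∧ g x = ‖x‖) {g : E →L[ℝ] ℝ} (hg : ‖g‖ = 1)
    (hgx : g x = ‖x‖) {P : E →L[ℝ] E} (hP : ‖P‖ ≤ 1) (hPx : P x = x) : g.comp P = g := by
  have hgPx : g.comp P x = ‖x‖ := by rw [comp_apply, hPx, hgx]
  have hgP : ‖g.comp P‖ ≤ 1 :=
    calc ‖g.comp P‖ ≤ ‖g‖ * ‖P‖ := opNorm_comp_le g P
      _ ≤ 1 := by rw [hg, one_mul]; exact hP
  exact huniq.unique ⟨norm_eq_one_of_norm_le_one_of_apply_eq_norm hx hgP hgPx, hgPx⟩ ⟨hg, hgx⟩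

end ContinuousLinearMap

theorem supporting_functional_vanishes_of_norm_one_projection_general
    (X : Type*) [NormedAddCommGroup X] [NormedSpace ℝ X]
    (smooth : ∀ x : X, x ≠ 0 → ∃! g : X →L[ℝ] ℝ, ‖g‖ = 1 ∧ g x = ‖x‖)
    (f : X →L[ℝ] ℝ) (w : X) (hw : f w = 1)
    (P : X →L[ℝ] X) (hP : ∀ x, P x = x - f x • w) (hPnorm : ‖P‖ = 1) :
    ∀ (y : X), y ≠ 0 → f y = 0 →
      ∀ fy : X →L[ℝ] ℝ, ‖fy‖ = 1 → fy y = ‖y‖ → fy w = 0 := by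
  intro y hy hfy fy hfy1 hfyy
  have hPy : P y = y := by rw [hP, hfy, zero_smul, sub_zero]
  have hPw : P w = 0 := by rw [hP, hw, one_smul, sub_self]
  have hcomp : fy.comp P = fy :=
    ContinuousLinearMap.comp_eq_self_of_existsUnique_supporting hy (smooth y hy) hfy1 hfyy
      hPnorm.le hPy
  rw [← hcomp, ContinuousLinearMap.comp_apply, hPw, map_zero]

/-- If `X` is a smooth Banach space, `Y = ker f` a hyperplane with `‖f‖ = 1`, and
`P x = x - f x • w` (with `f w = 1`) is a projection of norm `1`, then the unique
supporting functional `f_y` of every nonzero `y ∈ Y` satisfies `f_y w = 0`. -/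
theorem supporting_functional_vanishes_of_norm_one_projection
    (X : Type*) [NormedAddCommGroup X] [NormedSpace ℝ X] [CompleteSpace X]
    (smooth : ∀ x : X, x ≠ 0 → ∃! g : X →L[ℝ] ℝ, ‖g‖ = 1 ∧ g x = ‖x‖)
    (f : X →L[ℝ] ℝ) (hf : ‖f‖ = 1) (w : X) (hw : f w = 1)
    (P : X →L[ℝ] X) (hP : ∀ x, P x = x - f x • w) (hPnorm : ‖P‖ = 1) :
    ∀ (y : X), y ≠ 0 → f y = 0 →
      ∀ fy : X →L[ℝ] ℝ, ‖fy‖ = 1 → fy y = ‖y‖ → fy w = 0 :=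
  supporting_functional_vanishes_of_norm_one_projection_general X smooth f w hw P hP hPnorm
end

section
/- Let X be a smooth Banach space and Y = ker f a hyperplane of X, where ‖f‖ = 1. Suppose P : X → Y is a projection with ‖P‖ ≤ 1 + r, of the form P(x) = x - f(x)·w with f(w) = 1 and r ≥ 0. If t₀ ∈ [0,2] satisfies δ_{X*}(t₀) ≥ r/(2+2r), where δ_{X*} is the modulus of convexity of the dual space X*, then |f_y(w)| ≤ t₀·(2 + r) for every nonzero y ∈ Y, where f_y is the unique supporting functional of y. -/
/-- The modulus of convexity of a normed space `Z`. -/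
noncomputable def modulusOfConvexity (Z : Type*) [NormedAddCommGroup Z] [NormedSpace ℝ Z] (t : ℝ) : ℝ :=
  sInf {d : ℝ | ∃ x y : Z, ‖x‖ ≤ 1 ∧ ‖y‖ ≤ 1 ∧ t ≤ ‖x - y‖ ∧ d = 1 - ‖(1 / 2 : ℝ) • (x + y)‖}

/-!
Let `φ = f_y` and `ψ = (1 + r)⁻¹ • (φ ∘ P)`. Then `‖ψ‖ ≤ 1`, `ψ w = 0` and `ψ y = (1 + r)⁻¹ ‖y‖`.
If `‖φ - ψ‖ ≤ t₀`, then `|φ w| = |(φ - ψ) w| ≤ t₀ ‖w‖ ≤ t₀ (2 + r)`, since `‖w‖ = ‖id - P‖ ≤ 2 + r`.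
Otherwise the modulus of convexity bounds `‖(φ + ψ) / 2‖` by its value at `y / ‖y‖`, so a multiple
of the midpoint is a supporting functional of `y`; by smoothness it is `φ`, which forces
`ψ = (1 + r)⁻¹ • φ` and hence `φ w = 0`.
-/

theorem ContinuousLinearMap.norm_mul_norm_le_one_add_norm {𝕜 E : Type*} [NontriviallyNormedField 𝕜]
    [NormedAddCommGroup E] [NormedSpace 𝕜 E] {f : StrongDual 𝕜 E} {w : E} {P : E →L[𝕜] E}
    (hP : ∀ x, P x = x - f x • w) : ‖f‖ * ‖w‖ ≤ 1 + ‖P‖ := by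
  have hsub : ContinuousLinearMap.id 𝕜 E - P = f.smulRight w := by
    ext x
    simp [hP x]
  calc ‖f‖ * ‖w‖ = ‖ContinuousLinearMap.id 𝕜 E - P‖ := by
        rw [hsub, ContinuousLinearMap.norm_smulRight_apply]
    _ ≤ ‖ContinuousLinearMap.id 𝕜 E‖ + ‖P‖ := norm_sub_le _ _
    _ ≤ 1 + ‖P‖ := by gcongr; exact ContinuousLinearMap.norm_id_le

theorem norm_inv_smul_comp_le_one {E : Type*} [NormedAddCommGroup E] [NormedSpace ℝ E]
    {φ : StrongDual ℝ E} {P : E →L[ℝ] E} {c : ℝ} (hφ : ‖φ‖ ≤ 1) (hP : ‖P‖ ≤ c) (hc : 0 < c) :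
    ‖c⁻¹ • φ.comp P‖ ≤ 1 := by
  rw [norm_smul, Real.norm_of_nonneg (inv_nonneg.mpr hc.le)]
  refine inv_mul_le_one_of_le₀ ((φ.opNorm_comp_le P).trans ?_) hc.le
  simpa using mul_le_mul hφ hP (norm_nonneg P) zero_le_one

theorem modulusOfConvexity_le {Z : Type*} [NormedAddCommGroup Z] [NormedSpace ℝ Z] {t : ℝ}
    {x y : Z} (hx : ‖x‖ ≤ 1) (hy : ‖y‖ ≤ 1) (hxy : t ≤ ‖x - y‖) :
    modulusOfConvexity Z t ≤ 1 - ‖(1 / 2 : ℝ) • (x + y)‖ := by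
  refine csInf_le ⟨0, ?_⟩ ⟨x, y, hx, hy, hxy, rfl⟩
  rintro d ⟨a, b, ha, hb, -, rfl⟩
  have hmid : ‖(1 / 2 : ℝ) • (a + b)‖ ≤ 1 := by
    rw [norm_smul, Real.norm_of_nonneg (by norm_num)]
    linarith [norm_add_le a b]
  linarith

section Smooth

variable {X : Type*} [NormedAddCommGroup X] [NormedSpace ℝ X]

theorem norm_eq_one_of_norm_le_one_of_apply_eq_norm {g : StrongDual ℝ X} {y : X} (hy : y ≠ 0)
    (hg : ‖g‖ ≤ 1) (hgy : g y = ‖y‖) : ‖g‖ = 1 := by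
  refine le_antisymm hg ((mul_le_mul_iff_of_pos_right (norm_pos_iff.mpr hy)).mp ?_)
  calc 1 * ‖y‖ = ‖g y‖ := by rw [hgy, norm_norm, one_mul]
    _ ≤ ‖g‖ * ‖y‖ := g.le_opNorm y

theorem eq_smul_of_norm_le_of_apply_eq {y : X} (hy : y ≠ 0)
    (huniq : ∃! g : StrongDual ℝ X, ‖g‖ = 1 ∧ g y = ‖y‖) {φ m : StrongDual ℝ X}
    (hφ : ‖φ‖ = 1) (hφy : φ y = ‖y‖) {c : ℝ} (hc : 0 < c) (hm : ‖m‖ ≤ c)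
    (hmy : m y = c * ‖y‖) : m = c • φ := by
  have hcm_le : ‖c⁻¹ • m‖ ≤ 1 := by
    rw [norm_smul, Real.norm_of_nonneg (inv_nonneg.mpr hc.le)]
    exact inv_mul_le_one_of_le₀ hm hc.le
  have hcm_y : (c⁻¹ • m) y = ‖y‖ := by
    rw [smul_apply, hmy, smul_eq_mul, inv_mul_cancel_left₀ hc.ne']
  have hcm : c⁻¹ • m = φ :=
    huniq.unique ⟨norm_eq_one_of_norm_le_one_of_apply_eq_norm hy hcm_le hcm_y, hcm_y⟩ ⟨hφ, hφy⟩
  rw [← hcm, smul_inv_smul₀ hc.ne']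

theorem eq_smul_of_le_modulusOfConvexity {y : X} (hy : y ≠ 0)
    (huniq : ∃! g : StrongDual ℝ X, ‖g‖ = 1 ∧ g y = ‖y‖) {φ ψ : StrongDual ℝ X}
    (hφ : ‖φ‖ = 1) (hφy : φ y = ‖y‖) (hψ : ‖ψ‖ ≤ 1) {a : ℝ} (ha : -1 < a)
    (hψy : ψ y = a * ‖y‖) {t : ℝ} (ht : t ≤ ‖φ - ψ‖)
    (hδ : (1 - a) / 2 ≤ modulusOfConvexity (StrongDual ℝ X) t) : ψ = a • φ := by
  have hmid_le : ‖(1 / 2 : ℝ) • (φ + ψ)‖ ≤ (1 + a) / 2 := by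
    linarith [modulusOfConvexity_le hφ.le hψ ht]
  have hmid_y : ((1 / 2 : ℝ) • (φ + ψ)) y = (1 + a) / 2 * ‖y‖ := by
    simp only [smul_apply, add_apply, hφy, hψy, smul_eq_mul]
    ring
  have hmid := eq_smul_of_norm_le_of_apply_eq hy huniq hφ hφy (by linarith) hmid_le hmid_y
  calc ψ = (2 : ℝ) • ((1 / 2 : ℝ) • (φ + ψ)) - φ := by module
    _ = a • φ := by rw [hmid]; module

end Smooth

theorem supporting_functional_bound_of_small_projection_general
    (X : Type*) [NormedAddCommGroup X] [NormedSpace ℝ X]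
    (smooth : ∀ x : X, x ≠ 0 → ∃! g : X →L[ℝ] ℝ, ‖g‖ = 1 ∧ g x = ‖x‖)
    (f : X →L[ℝ] ℝ) (hf : ‖f‖ = 1) (w : X) (hw : f w = 1) (r : ℝ) (hr : 0 ≤ r)
    (P : X →L[ℝ] X) (hP : ∀ x, P x = x - f x • w) (hPnorm : ‖P‖ ≤ 1 + r)
    (t₀ : ℝ) (ht₀ : t₀ ∈ Set.Icc (0 : ℝ) 2)
    (hδ : modulusOfConvexity (X →L[ℝ] ℝ) t₀ ≥ r / (2 + 2 * r)) :
    ∀ (y : X), y ≠ 0 → f y = 0 →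
      ∀ fy : X →L[ℝ] ℝ, ‖fy‖ = 1 → fy y = ‖y‖ → |fy w| ≤ t₀ * (2 + r) := by
  intro y hy hfy fy hfy_norm hfy_y
  have hr₁ : 0 < 1 + r := by linarith
  set ψ : X →L[ℝ] ℝ := (1 + r)⁻¹ • fy.comp P
  have hψ_norm : ‖ψ‖ ≤ 1 := norm_inv_smul_comp_le_one hfy_norm.le hPnorm hr₁
  have hψ_w : ψ w = 0 := by simp [ψ, hP w, hw]
  have hψ_y : ψ y = (1 + r)⁻¹ * ‖y‖ := by simp [ψ, hP y, hfy, hfy_y]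
  have hw_norm : ‖w‖ ≤ 2 + r := by
    have := ContinuousLinearMap.norm_mul_norm_le_one_add_norm hP
    rw [hf, one_mul] at this
    linarith
  rcases le_or_gt ‖fy - ψ‖ t₀ with hclose | hfar
  · calc |fy w| = ‖(fy - ψ) w‖ := by simp [hψ_w]
      _ ≤ ‖fy - ψ‖ * ‖w‖ := (fy - ψ).le_opNorm w
      _ ≤ t₀ * (2 + r) := mul_le_mul hclose hw_norm (norm_nonneg w) ht₀.1
  · have hδ' : (1 - (1 + r)⁻¹) / 2 ≤ modulusOfConvexity (X →L[ℝ] ℝ) t₀ := by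
      convert hδ using 1
      field_simp
      ring
    have hψ_eq := eq_smul_of_le_modulusOfConvexity hy (smooth y hy) hfy_norm hfy_y hψ_norm
      (by linarith [inv_pos.mpr hr₁]) hψ_y hfar.le hδ'
    have hfy_w : fy w = 0 := by
      have := congrArg (fun g : X →L[ℝ] ℝ => g w) hψ_eq
      simpa [hψ_w, hr₁.ne'] using this.symm
    rw [hfy_w, abs_zero]
    exact mul_nonneg ht₀.1 (by linarith)

/-- Lemma 2.2 (Lemma `projekcja`): bound on `|f_y w|` for a projection of norm `≤ 1 + r`,
in terms of the modulus of convexity of the dual space. -/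
theorem supporting_functional_bound_of_small_projection
    (X : Type*) [NormedAddCommGroup X] [NormedSpace ℝ X] [CompleteSpace X]
    (smooth : ∀ x : X, x ≠ 0 → ∃! g : X →L[ℝ] ℝ, ‖g‖ = 1 ∧ g x = ‖x‖)
    (f : X →L[ℝ] ℝ) (hf : ‖f‖ = 1) (w : X) (hw : f w = 1) (r : ℝ) (hr : 0 ≤ r)
    (P : X →L[ℝ] X) (hP : ∀ x, P x = x - f x • w) (hPnorm : ‖P‖ ≤ 1 + r)
    (t₀ : ℝ) (ht₀ : t₀ ∈ Set.Icc (0 : ℝ) 2)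
    (hδ : modulusOfConvexity (X →L[ℝ] ℝ) t₀ ≥ r / (2 + 2 * r)) :
    ∀ (y : X), y ≠ 0 → f y = 0 →
      ∀ fy : X →L[ℝ] ℝ, ‖fy‖ = 1 → fy y = ‖y‖ → |fy w| ≤ t₀ * (2 + r) :=
  supporting_functional_bound_of_small_projection_general X smooth f hf w hw r hr P hP hPnorm t₀ ht₀
    hδ
end

section
/- Let ‖·‖ be the Euclidean norm on ℝ^n (n ≥ 2) and let f₁, …, f_m be linear functionals on ℝ^n, each of Euclidean dual norm 1. Then there exists y ∈ ℝ^n with ‖y‖₂ = 1 such that |f_i(y)| ≥ 1/((n-1)·m) for every i = 1, …, m. -/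
/-!
By the Riesz representation each `f i` is `⟪v i, ·⟫` for a unit vector `v i`. Among all sign
choices `ε ∈ {±1}ᵐ` take one maximizing `‖s‖` for `s = ∑ ε i • v i`. Flipping `ε j` replaces `s`
by `s - 2 ε j • v j`, and since this cannot increase the norm, `|⟪s, v j⟫| ≥ ‖v j‖² = 1`. As
`‖s‖ ≤ m`, the unit vector `s / ‖s‖` satisfies `|f i (s / ‖s‖)| ≥ 1 / m ≥ 1 / ((n - 1) m)`.
-/

open scoped InnerProductSpace

section SignedSums

variable {E : Type*} [NormedAddCommGroup E] [InnerProductSpace ℝ E]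

theorem sq_norm_le_inner_of_norm_sub_two_smul_le {s w : E}
    (h : ‖s - (2 : ℝ) • w‖ ≤ ‖s‖) : ‖w‖ ^ 2 ≤ ⟪s, w⟫_ℝ := by
  have hsq := pow_le_pow_left₀ (norm_nonneg _) h 2
  rw [norm_sub_sq_real, real_inner_smul_right, norm_smul, Real.norm_two] at hsq
  nlinarith

theorem exists_signs_sq_norm_le_abs_inner_sum {ι : Type*} [Fintype ι] [DecidableEq ι]
    (v : ι → E) :
    ∃ ε : ι → ℝ, (∀ i, |ε i| = 1) ∧ ∀ j, ‖v j‖ ^ 2 ≤ |⟪∑ i, ε i • v i, v j⟫_ℝ| := by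
  let signs : Finset (ι → ℝ) := Fintype.piFinset fun _ => {-1, 1}
  have mem_signs {ε : ι → ℝ} : ε ∈ signs ↔ ∀ i, ε i = -1 ∨ ε i = 1 := by
    simp [signs, Fintype.mem_piFinset]
  obtain ⟨ε, hε, hmax⟩ := signs.exists_max_image (fun ε => ‖∑ i, ε i • v i‖)
    ⟨fun _ => 1, mem_signs.2 fun _ => Or.inr rfl⟩
  have abs_ε (i : ι) : |ε i| = 1 := by
    rcases mem_signs.1 hε i with h | h <;> simp [h]
  refine ⟨ε, abs_ε, fun j => ?_⟩
  have flip_mem : Function.update ε j (-ε j) ∈ signs := by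
    rw [mem_signs]
    intro i
    rcases eq_or_ne i j with rfl | hij
    · rcases mem_signs.1 hε i with h | h <;> simp [h]
    · simpa [Function.update_of_ne hij] using mem_signs.1 hε i
  have flip_sum : ∑ i, Function.update ε j (-ε j) i • v i
      = ∑ i, ε i • v i - (2 : ℝ) • (ε j • v j) := by
    rw [← Finset.sum_erase_add _ _ (Finset.mem_univ j),
      ← Finset.sum_erase_add _ _ (Finset.mem_univ j),
      Finset.sum_congr rfl fun i hi => by rw [Function.update_of_ne (Finset.ne_of_mem_erase hi)],
      Function.update_self]
    module
  set s := ∑ i, ε i • v i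
  have key := sq_norm_le_inner_of_norm_sub_two_smul_le (flip_sum ▸ hmax _ flip_mem)
  rw [norm_smul, mul_pow, Real.norm_eq_abs, abs_ε, one_pow, one_mul, real_inner_smul_right]
    at key
  calc ‖v j‖ ^ 2 ≤ ε j * ⟪s, v j⟫_ℝ := key
    _ ≤ |ε j * ⟪s, v j⟫_ℝ| := le_abs_self _
    _ = |⟪s, v j⟫_ℝ| := by rw [abs_mul, abs_ε, one_mul]

theorem exists_norm_eq_one_card_inv_le_abs_inner [Nontrivial E] {ι : Type*} [Fintype ι]
    {v : ι → E} (hv : ∀ i, ‖v i‖ = 1) :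
    ∃ y : E, ‖y‖ = 1 ∧ ∀ i, 1 / (Fintype.card ι : ℝ) ≤ |⟪v i, y⟫_ℝ| := by
  classical
  rcases isEmpty_or_nonempty ι with hι | ⟨⟨i₀⟩⟩
  · obtain ⟨y, hy⟩ := exists_norm_eq E zero_le_one
    exact ⟨y, hy, isEmptyElim⟩
  obtain ⟨ε, abs_ε, hs⟩ := exists_signs_sq_norm_le_abs_inner_sum v
  set s := ∑ i, ε i • v i
  simp only [hv, one_pow] at hs
  have norm_s_le : ‖s‖ ≤ Fintype.card ι := by
    calc ‖s‖ ≤ ∑ i, ‖ε i • v i‖ := norm_sum_le _ _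
      _ = Fintype.card ι := by simp [norm_smul, abs_ε, hv]
  have norm_s_pos : 0 < ‖s‖ := by
    have := (hs i₀).trans (abs_real_inner_le_norm s (v i₀))
    rw [hv, mul_one] at this
    linarith
  refine ⟨‖s‖⁻¹ • s, by rw [norm_smul, norm_inv, norm_norm, inv_mul_cancel₀ norm_s_pos.ne'],
    fun i => ?_⟩
  rw [real_inner_smul_right, abs_mul, abs_inv, abs_norm, real_inner_comm, ← div_eq_inv_mul]
  exact div_le_div₀ (abs_nonneg _) (hs i) norm_s_pos norm_s_le

end SignedSums

/-- Euclidean case of Lemma 3.2: given `m` norm-one functionals on Euclidean `ℝⁿ`,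
there is a unit vector on which all of them are at least `1/((n-1)m)` in absolute value. -/
theorem exists_unit_vector_functionals_large_euclidean
    (n m : ℕ) (hn : 2 ≤ n)
    (f : Fin m → (EuclideanSpace ℝ (Fin n) →L[ℝ] ℝ))
    (hf : ∀ i, ‖f i‖ = 1) :
    ∃ y : EuclideanSpace ℝ (Fin n), ‖y‖ = 1 ∧
      ∀ i, |f i y| ≥ 1 / (((n : ℝ) - 1) * m) := by
  let v i := (InnerProductSpace.toDual ℝ (EuclideanSpace ℝ (Fin n))).symm (f i)
  have : Nonempty (Fin n) := ⟨⟨0, by omega⟩⟩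
  obtain ⟨y, hy, hvy⟩ := exists_norm_eq_one_card_inv_le_abs_inner (v := v) fun i => by
    simpa [v] using hf i
  refine ⟨y, hy, fun i => ?_⟩
  have one_le_n_sub_one : (1 : ℝ) ≤ n - 1 := by
    have : (2 : ℝ) ≤ n := by exact_mod_cast hn
    linarith
  calc 1 / (((n : ℝ) - 1) * m) = (n - 1 : ℝ)⁻¹ * (1 / m) := by rw [one_div, mul_inv, one_div]
    _ ≤ 1 / m := mul_le_of_le_one_left (by positivity) (inv_le_one_of_one_le₀ one_le_n_sub_one)
    _ ≤ |f i y| := by simpa [v, InnerProductSpace.toDual_symm_apply] using hvy i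
end

section
/- Let ‖·‖ be an arbitrary norm on ℝ^n (n ≥ 2) and let f₁, …, f_m be nonzero linear functionals on ℝ^n. Then there exists y ∈ ℝ^n with ‖y‖ = 1 such that |f_i(y)| ≥ ‖f_i‖ / (√n·(n-1)·m) for every i = 1, …, m, where ‖f_i‖ is the dual norm of f_i with respect to ‖·‖. -/
/-!
Instead of John's ellipsoid (distortion `√n`) we use an Auerbach basis: unit vectors maximising the
determinant, whose coordinate functionals have norm at most `1` by Cramer's rule. Its coordinates
identify `X` with Euclidean space up to `√n` in each direction, so the functionals lose a factor `n`,
which is affordable whenever `n ≤ √n (n - 1)`, i.e. `n ≥ 3`. There, a choice of signs maximising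
`‖∑ ±vᵢ‖` over the normalised Riesz representatives `vᵢ` gives `s` with `‖s‖ ≤ m` and
`|⟪vᵢ, s⟫| ≥ 1`, because flipping one sign cannot increase the norm. In the plane the `m` lines
`ker fᵢ` leave an angular gap of width at least `π / m`, and its bisector `y` satisfies
`|⟪vᵢ, y⟫| ≥ sin (π / 2m) ≥ √2 / m`, which compensates for the extra loss. A single functional only
needs the definition of the operator norm.
-/

open Module Real RealInnerProductSpace

def HasCommonNormingVector (E : Type*) [NormedAddCommGroup E] [NormedSpace ℝ E] (ι : Type*)
    (c : ℝ) : Prop :=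
  ∀ f : ι → StrongDual ℝ E, ∃ y : E, ‖y‖ = 1 ∧ ∀ i, c * ‖f i‖ ≤ |f i y|

namespace HasCommonNormingVector

variable {E F ι : Type*} [NormedAddCommGroup E] [NormedSpace ℝ E]
  [NormedAddCommGroup F] [NormedSpace ℝ F]

theorem mono {c c' : ℝ} (h : HasCommonNormingVector E ι c) (hc : c' ≤ c) :
    HasCommonNormingVector E ι c' := by
  intro f
  obtain ⟨y, hy, hfy⟩ := h f
  exact ⟨y, hy, fun i => (mul_le_mul_of_nonneg_right hc (norm_nonneg _)).trans (hfy i)⟩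

theorem of_norm_le [Nontrivial E] {c r : ℝ}
    (h : ∀ f : ι → StrongDual ℝ E, ∃ s : E, ‖s‖ ≤ r ∧ ∀ i, c * ‖f i‖ ≤ |f i s|) :
    HasCommonNormingVector E ι (c / r) := by
  intro f
  obtain ⟨s, hsr, hfs⟩ := h f
  rcases eq_or_ne s 0 with rfl | hs
  · obtain ⟨y, hy⟩ := exists_norm_eq E zero_le_one
    refine ⟨y, hy, fun i => ?_⟩
    have hfi : c * ‖f i‖ ≤ 0 := by simpa using hfs i
    rw [div_mul_eq_mul_div]
    exact (div_nonpos_of_nonpos_of_nonneg hfi ((norm_nonneg _).trans hsr)).trans (abs_nonneg _)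
  · refine ⟨‖s‖⁻¹ • s, norm_smul_inv_norm hs, fun i => ?_⟩
    rw [map_smul, smul_eq_mul, abs_mul, abs_inv, abs_norm, div_mul_eq_mul_div, inv_mul_eq_div]
    exact div_le_div₀ (abs_nonneg _) (hfs i) (norm_pos_iff.mpr hs) hsr

theorem of_continuousLinearEquiv [Nontrivial E] {c a b : ℝ} (hc : 0 ≤ c)
    (h : HasCommonNormingVector F ι c) (T : E ≃L[ℝ] F)
    (ha : ∀ x, ‖x‖ ≤ a * ‖T x‖) (hb : ∀ x, ‖T x‖ ≤ b * ‖x‖) :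
    HasCommonNormingVector E ι (c / (a * b)) := by
  have hb₀ : 0 < b := by
    obtain ⟨x, hx⟩ := exists_ne (0 : E)
    have hTx : 0 < ‖T x‖ := norm_pos_iff.mpr (T.map_ne_zero_iff.mpr hx)
    exact pos_of_mul_pos_left (hTx.trans_le (hb x)) (norm_nonneg x)
  have hnorm : ∀ g : StrongDual ℝ E, ‖g‖ ≤ b * ‖g.comp (T.symm : F →L[ℝ] E)‖ := fun g =>
    g.opNorm_le_bound (by positivity) fun x =>
      calc ‖g x‖ = ‖g.comp (T.symm : F →L[ℝ] E) (T x)‖ := by simp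
        _ ≤ ‖g.comp (T.symm : F →L[ℝ] E)‖ * (b * ‖x‖) := by
          grw [ContinuousLinearMap.le_opNorm, hb x]
        _ = b * ‖g.comp (T.symm : F →L[ℝ] E)‖ * ‖x‖ := by ring
  rw [mul_comm, ← div_div]
  refine of_norm_le fun f => ?_
  obtain ⟨w, hw, hφw⟩ := h fun i => (f i).comp (T.symm : F →L[ℝ] E)
  refine ⟨T.symm w, by simpa [hw] using ha (T.symm w), fun i => ?_⟩
  calc c / b * ‖f i‖ ≤ c / b * (b * ‖(f i).comp (T.symm : F →L[ℝ] E)‖) := by grw [hnorm]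
    _ = c * ‖(f i).comp (T.symm : F →L[ℝ] E)‖ := by field_simp
    _ ≤ |f i (T.symm w)| := hφw i

theorem of_subsingleton [Subsingleton ι] [Nontrivial E] {c : ℝ} (hc : c < 1) :
    HasCommonNormingVector E ι c := by
  rw [← div_one c]
  refine of_norm_le fun f => ?_
  rcases isEmpty_or_nonempty ι with hι | ⟨⟨i₀⟩⟩
  · exact ⟨0, by simp, fun i => isEmptyElim i⟩
  rcases eq_or_ne (f i₀) 0 with h₀ | h₀
  · exact ⟨0, by simp, fun i => by simp [Subsingleton.elim i i₀, h₀]⟩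
  obtain ⟨x, hx, hfx⟩ :=
    (f i₀).exists_lt_apply_of_lt_opNorm (mul_lt_of_lt_one_left (norm_pos_iff.mpr h₀) hc)
  exact ⟨x, hx.le, fun i => Subsingleton.elim i i₀ ▸ hfx.le⟩

end HasCommonNormingVector

theorem exists_auerbach_basis {E ι : Type*} [NormedAddCommGroup E] [NormedSpace ℝ E]
    [FiniteDimensional ℝ E] [Fintype ι] [DecidableEq ι] (b₀ : Basis ι ℝ E) :
    ∃ b : Basis ι ℝ E, (∀ i, ‖b i‖ ≤ 1) ∧ ∀ i x, |b.coord i x| ≤ ‖x‖ := by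
  have hcont : Continuous fun v : ι → E => b₀.det v := by
    simp only [Basis.det_apply]
    exact Continuous.matrix_det <| continuous_pi fun i => continuous_pi fun j =>
      (b₀.coord i).continuous_of_finiteDimensional.comp (continuous_apply j)
  let K : Set (ι → E) := Set.univ.pi fun _ => Metric.closedBall 0 1
  have hK : ∀ v : ι → E, v ∈ K ↔ ∀ i, ‖v i‖ ≤ 1 := by simp [K]
  let v₀ := b₀.isUnitSMul fun i => (inv_pos.mpr (norm_pos_iff.mpr (b₀.ne_zero i))).ne'.isUnit
  have hv₀K : ⇑v₀ ∈ K := (hK _).mpr fun i => by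
    rw [Basis.isUnitSMul_apply]; exact (norm_smul_inv_norm (b₀.ne_zero i)).le
  obtain ⟨e, heK, hmax⟩ := (isCompact_univ_pi fun _ => isCompact_closedBall (0 : E) 1).exists_isMaxOn
    ⟨_, hv₀K⟩ (continuous_abs.comp hcont).continuousOn
  have hmax' : ∀ v ∈ K, |b₀.det v| ≤ |b₀.det e| := fun v hv => hmax hv
  have hdet : b₀.det e ≠ 0 := fun h => by
    have := hmax' _ hv₀K
    rw [h, abs_zero, abs_nonpos_iff] at this
    exact (b₀.isUnit_det v₀).ne_zero this
  obtain ⟨hli, hsp⟩ := b₀.is_basis_iff_det.mpr (isUnit_iff_ne_zero.mpr hdet)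
  set b := Basis.mk hli hsp.ge
  refine ⟨b, fun i => by simpa [b] using (hK e).mp heK i, fun i x => ?_⟩
  have hcramer : ∀ y, b₀.det e * b.coord i y = b₀.det (Function.update e i y) := fun y => by
    simpa only [LinearMap.smul_apply, smul_eq_mul, MultilinearMap.toLinearMap_apply,
      AlternatingMap.coe_multilinearMap] using
      congr($(b₀.det_smul_mk_coord_eq_det_update hli hsp.ge i) y)
  have hunit : ∀ y : E, ‖y‖ = 1 → ‖LinearMap.toContinuousLinearMap (b.coord i) y‖ ≤ 1 := by
    intro y hy
    have hupd : Function.update e i y ∈ K := (hK _).mpr fun j => by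
      rcases eq_or_ne j i with rfl | hj
      · simp [hy]
      · simpa [hj] using (hK e).mp heK j
    have := hmax' _ hupd
    rw [← hcramer, abs_mul] at this
    simpa using le_of_mul_le_mul_left (this.trans_eq (mul_one _).symm) (abs_pos.mpr hdet)
  have hnorm := ContinuousLinearMap.opNorm_le_of_unit_norm zero_le_one hunit
  simpa using (LinearMap.toContinuousLinearMap (b.coord i)).le_of_opNorm_le hnorm x

theorem exists_continuousLinearEquiv_norm_le_sqrt_finrank_mul {E F : Type*}
    [NormedAddCommGroup E] [NormedSpace ℝ E] [FiniteDimensional ℝ E]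
    [NormedAddCommGroup F] [InnerProductSpace ℝ F] [FiniteDimensional ℝ F] {n : ℕ}
    (hE : finrank ℝ E = n) (hF : finrank ℝ F = n) :
    ∃ T : E ≃L[ℝ] F, (∀ x, ‖x‖ ≤ √n * ‖T x‖) ∧ ∀ x, ‖T x‖ ≤ √n * ‖x‖ := by
  obtain ⟨b, hb, hcoord⟩ := exists_auerbach_basis (finBasisOfFinrankEq ℝ E hE)
  let o := (stdOrthonormalBasis ℝ F).reindex (finCongr hF)
  let T := b.equivFun.toContinuousLinearEquiv.trans <|
    (EuclideanSpace.equiv (Fin n) ℝ).symm.trans o.repr.symm.toContinuousLinearEquiv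
  have hT : ∀ x, ‖T x‖ = √(∑ j, b.coord j x ^ 2) := fun x => by
    simp [T, EuclideanSpace.norm_eq]
  refine ⟨T, fun x => ?_, fun x => ?_⟩
  · calc ‖x‖ = ‖∑ j, b.coord j x • b j‖ := by simp [b.sum_repr]
      _ ≤ ∑ j, |b.coord j x| * 1 := (norm_sum_le _ _).trans <| Finset.sum_le_sum fun j _ => by
          rw [norm_smul, Real.norm_eq_abs]; gcongr; exact hb j
      _ ≤ √(∑ j, |b.coord j x| ^ 2) * √(∑ _j : Fin n, 1 ^ 2) := Real.sum_mul_le_sqrt_mul_sqrt _ _ _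
      _ = √n * ‖T x‖ := by simp [hT, mul_comm]
  · calc ‖T x‖ ≤ √(∑ _j : Fin n, ‖x‖ ^ 2) := by
          rw [hT]
          exact Real.sqrt_le_sqrt <| Finset.sum_le_sum fun j _ => sq_le_sq.mpr <| by
            simpa using hcoord j x
      _ = √n * ‖x‖ := by simp [Real.sqrt_mul, Real.sqrt_sq]

theorem HasCommonNormingVector.of_finrank_eq {E F ι : Type*} [NormedAddCommGroup E]
    [NormedSpace ℝ E] [FiniteDimensional ℝ E] [Nontrivial E] [NormedAddCommGroup F]
    [InnerProductSpace ℝ F] [FiniteDimensional ℝ F] {n : ℕ} {c : ℝ} (hc : 0 ≤ c)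
    (h : HasCommonNormingVector F ι c) (hE : finrank ℝ E = n) (hF : finrank ℝ F = n) :
    HasCommonNormingVector E ι (c / n) := by
  obtain ⟨T, hT₁, hT₂⟩ := exists_continuousLinearEquiv_norm_le_sqrt_finrank_mul hE hF
  simpa [Real.mul_self_sqrt (Nat.cast_nonneg n)] using h.of_continuousLinearEquiv hc T hT₁ hT₂

theorem exists_norm_le_card_forall_sq_norm_le_abs_inner {F ι : Type*} [NormedAddCommGroup F]
    [InnerProductSpace ℝ F] [Fintype ι] (v : ι → F) (hv : ∀ i, ‖v i‖ ≤ 1) :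
    ∃ s : F, ‖s‖ ≤ Fintype.card ι ∧ ∀ i, ‖v i‖ ^ 2 ≤ |⟪v i, s⟫| := by
  classical
  set signs := Fintype.piFinset fun _ : ι => ({-1, 1} : Finset ℝ)
  have hsigns : ∀ ε ∈ signs, ∀ i, ε i = -1 ∨ ε i = 1 := fun ε hε i => by
    simpa using Fintype.mem_piFinset.mp hε i
  let S : (ι → ℝ) → F := fun ε => ∑ j, ε j • v j
  obtain ⟨ε, hε, hmax⟩ := signs.exists_max_image (‖S ·‖) ⟨fun _ => 1, by simp [signs]⟩
  have habs : ∀ j, |ε j| = 1 := fun j => by rcases hsigns ε hε j with h | h <;> simp [h]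
  refine ⟨S ε, ?_, fun i => ?_⟩
  · calc ‖S ε‖ ≤ ∑ j, ‖ε j • v j‖ := norm_sum_le _ _
      _ ≤ ∑ _j : ι, (1 : ℝ) := Finset.sum_le_sum fun j _ => by
          rw [norm_smul, Real.norm_eq_abs, habs, one_mul]; exact hv j
      _ = Fintype.card ι := by simp
  have hflip : S (Function.update ε i (-ε i)) = S ε - (2 * ε i) • v i := by
    simp only [S, Function.apply_update (fun j x => x • v j),
      Finset.sum_update_of_mem (Finset.mem_univ i),
      Finset.sum_eq_add_sum_sdiff_singleton_of_mem (Finset.mem_univ i) (fun j => ε j • v j)]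
    module
  have hmem : Function.update ε i (-ε i) ∈ signs := Fintype.mem_piFinset.mpr fun j => by
    rcases eq_or_ne j i with rfl | hj
    · rcases hsigns ε hε j with h | h <;> simp [h]
    · simpa [hj] using Fintype.mem_piFinset.mp hε j
  have hle : ‖S ε - (2 * ε i) • v i‖ ^ 2 ≤ ‖S ε‖ ^ 2 := by
    rw [← hflip]; gcongr; exact hmax _ hmem
  rw [norm_sub_sq_real, norm_smul, real_inner_smul_right, Real.norm_eq_abs, abs_mul,
    abs_two, habs, real_inner_comm] at hle
  calc ‖v i‖ ^ 2 ≤ ε i * ⟪v i, S ε⟫ := by linarith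
    _ ≤ |ε i * ⟪v i, S ε⟫| := le_abs_self _
    _ = |⟪v i, S ε⟫| := by rw [abs_mul, habs, one_mul]

theorem hasCommonNormingVector_one_div_card {F ι : Type*} [NormedAddCommGroup F]
    [InnerProductSpace ℝ F] [CompleteSpace F] [Nontrivial F] [Fintype ι] :
    HasCommonNormingVector F ι (1 / Fintype.card ι) := by
  refine HasCommonNormingVector.of_norm_le fun f => ?_
  let u i := (InnerProductSpace.toDual ℝ F).symm (f i)
  obtain ⟨s, hs, hus⟩ := exists_norm_le_card_forall_sq_norm_le_abs_inner (fun i => ‖u i‖⁻¹ • u i)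
    fun i => by
      rcases eq_or_ne (u i) 0 with h | h
      · simp [h]
      · exact (norm_smul_inv_norm h).le
  refine ⟨s, hs, fun i => ?_⟩
  have hfu : ∀ x, f i x = ⟪u i, x⟫ := fun x => (InnerProductSpace.toDual_symm_apply).symm
  have hnorm : ‖f i‖ = ‖u i‖ := ((InnerProductSpace.toDual ℝ F).symm.norm_map _).symm
  rw [one_mul, hfu, hnorm]
  rcases eq_or_ne (u i) 0 with h | h
  · simp [h]
  have hunit : ‖‖u i‖⁻¹ • u i‖ = 1 := norm_smul_inv_norm h
  have hui := hus i
  rw [hunit, real_inner_smul_left, abs_mul, abs_inv, abs_norm] at hui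
  rwa [one_pow, le_inv_mul_iff₀ (norm_pos_iff.mpr h), mul_one] at hui

theorem exists_forall_notMem_Ioo_mul {m : ℕ} {w : ℝ} (hw : 0 < w) (q : Fin m → ℝ) {i₀ : Fin m}
    (hi₀ : q i₀ ≤ 0) : ∃ k : Fin m, ∀ i, q i ∉ Set.Ioo ((k : ℕ) * w) (((k : ℕ) + 1) * w) := by
  by_contra! h
  choose g hg using h
  have hinj : Function.Injective g := by
    intro k k' hkk'
    have h₁ := hg k
    have h₂ := hg k'
    rw [hkk'] at h₁
    have hlt : ((k : ℕ) : ℝ) < (k' : ℕ) + 1 := lt_of_mul_lt_mul_right (h₁.1.trans h₂.2) hw.le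
    have hlt' : ((k' : ℕ) : ℝ) < (k : ℕ) + 1 := lt_of_mul_lt_mul_right (h₂.1.trans h₁.2) hw.le
    norm_cast at hlt hlt'
    omega
  obtain ⟨k, hk⟩ := Finite.injective_iff_surjective.mp hinj i₀
  have hpos := (hg k).1
  rw [hk] at hpos
  linarith [mul_nonneg (Nat.cast_nonneg (k : ℕ)) hw.le]

theorem exists_forall_fract_sub_mem_Icc {m : ℕ} (hm : 0 < m) (p : Fin m → ℝ) :
    ∃ t : ℝ, ∀ i, Int.fract (t - p i) ∈ Set.Icc (1 / (2 * (m : ℝ))) (1 - 1 / (2 * m)) := by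
  set w : ℝ := 1 / m with hw_def
  have hw : 0 < w := by positivity
  have hmw : (m : ℝ) * w = 1 := mul_one_div_cancel (by positivity)
  have hhalf : 1 / (2 * (m : ℝ)) = w / 2 := by rw [hw_def]; field_simp
  let i₀ : Fin m := ⟨0, hm⟩
  let q i := Int.fract (p i - p i₀)
  obtain ⟨k, hk⟩ := exists_forall_notMem_Ioo_mul hw q (i₀ := i₀) (by simp [q])
  have hkm : ((k : ℕ) : ℝ) + 1 ≤ m := by exact_mod_cast k.isLt
  have hkw : ((k : ℕ) + 1) * w ≤ 1 := (by gcongr : _ ≤ (m : ℝ) * w).trans hmw.le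
  have hk0 : 0 ≤ ((k : ℕ) : ℝ) * w := by positivity
  refine ⟨p i₀ + ((k : ℕ) + 1 / 2) * w, fun i => ?_⟩
  have hq : Int.fract (p i₀ + ((k : ℕ) + 1 / 2) * w - p i) =
      Int.fract (((k : ℕ) + 1 / 2) * w - q i) := by
    rw [show ((k : ℕ) + 1 / 2) * w - q i = p i₀ + ((k : ℕ) + 1 / 2) * w - p i + ⌊p i - p i₀⌋ by
      simp only [q, Int.fract]; ring, Int.fract_add_intCast]
  have hq₀ := Int.fract_nonneg (p i - p i₀)
  have hq₁ := Int.fract_lt_one (p i - p i₀)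
  rw [hq, hhalf]
  rcases le_or_gt (q i) ((k : ℕ) * w) with hle | hlt
  · rw [Int.fract_eq_self.mpr ⟨by linarith, by linarith⟩]
    constructor <;> linarith
  · have hge : ((k : ℕ) + 1) * w ≤ q i := not_lt.mp fun h => hk i ⟨hlt, h⟩
    rw [Int.fract_eq_iff.mpr ⟨(by linarith : (0:ℝ) ≤ ((k : ℕ) + 1 / 2) * w - q i + 1),
      by linarith, -1, by push_cast; ring⟩]
    constructor <;> linarith

theorem sin_pi_div_two_mul_le_abs_sin_pi_mul {m : ℕ} (hm : 0 < m) {x : ℝ}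
    (hx : Int.fract x ∈ Set.Icc (1 / (2 * (m : ℝ))) (1 - 1 / (2 * m))) :
    sin (π / (2 * m)) ≤ |sin (π * x)| := by
  set y := π * Int.fract x
  have hδ : π / (2 * m) = π * (1 / (2 * m)) := by ring
  have hy₁ : π / (2 * m) ≤ y := by rw [hδ]; exact mul_le_mul_of_nonneg_left hx.1 pi_pos.le
  have hy₂ : y ≤ π - π / (2 * m) := by
    rw [hδ, ← mul_one_sub]; exact mul_le_mul_of_nonneg_left hx.2 pi_pos.le
  have hδ₂ : π / (2 * m) ≤ π / 2 := by
    gcongr; linarith [show (1 : ℝ) ≤ m by exact_mod_cast hm]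
  have hδ₀ : 0 ≤ π / (2 * m) := by positivity
  have hsin : |sin (π * x)| = sin y := by
    rw [show π * x = y + ⌊x⌋ * π by simp only [y, Int.fract]; ring, sin_add_int_mul_pi,
      abs_mul, abs_neg_one_zpow, one_mul,
      abs_of_nonneg (sin_nonneg_of_nonneg_of_le_pi (by linarith) (by linarith))]
  rw [hsin]
  rcases le_total y (π / 2) with h | h
  · exact sin_le_sin_of_le_of_le_pi_div_two (by linarith) h hy₁
  · rw [← sin_pi_sub y]
    exact sin_le_sin_of_le_of_le_pi_div_two (by linarith) (by linarith) (by linarith)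

theorem Complex.hasCommonNormingVector_sin {m : ℕ} (hm : 0 < m) :
    HasCommonNormingVector ℂ (Fin m) (Real.sin (π / (2 * m))) := by
  intro f
  let u i := (InnerProductSpace.toDual ℝ ℂ).symm (f i)
  obtain ⟨t, ht⟩ := exists_forall_fract_sub_mem_Icc hm fun i => arg (u i) / π + 1 / 2
  refine ⟨exp ((π * t : ℝ) * I), norm_exp_ofReal_mul_I _, fun i => ?_⟩
  have hnorm : ‖f i‖ = ‖u i‖ := ((InnerProductSpace.toDual ℝ ℂ).symm.norm_map _).symm
  have hf : f i (exp ((π * t : ℝ) * I)) =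
      -(‖u i‖ * Real.sin (π * (t - (arg (u i) / π + 1 / 2)))) := by
    have harg : π * (t - (arg (u i) / π + 1 / 2)) = π * t - arg (u i) - π / 2 := by
      field_simp; ring
    rw [← InnerProductSpace.toDual_symm_apply, Complex.inner, mul_re, exp_ofReal_mul_I_re,
      exp_ofReal_mul_I_im, conj_re, conj_im, ← norm_mul_cos_arg, ← norm_mul_sin_arg, harg,
      Real.sin_sub_pi_div_two, Real.cos_sub]
    ring
  rw [hf, abs_neg, abs_mul, abs_norm, hnorm, mul_comm]
  exact mul_le_mul_of_nonneg_left (sin_pi_div_two_mul_le_abs_sin_pi_mul hm (ht i)) (norm_nonneg _)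

theorem sqrt_two_div_le_sin_pi_div_two_mul {m : ℕ} (hm : 2 ≤ m) :
    √2 / m ≤ sin (π / (2 * m)) := by
  have hm' : (2 : ℝ) ≤ m := by exact_mod_cast hm
  have hw : 0 ≤ 1 - 2 / (m : ℝ) := by rw [sub_nonneg, div_le_one (by linarith)]; exact hm'
  have h := strictConcaveOn_sin_Icc.concaveOn.2 (⟨le_rfl, pi_pos.le⟩ : (0 : ℝ) ∈ Set.Icc 0 π)
    (⟨by positivity, by linarith [pi_pos]⟩ : π / 4 ∈ Set.Icc 0 π) hw (by positivity)
    (sub_add_cancel 1 (2 / (m : ℝ)))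
  simp only [smul_eq_mul, sin_zero, mul_zero, zero_add, sin_pi_div_four] at h
  calc √2 / m = 2 / m * (√2 / 2) := by ring
    _ ≤ sin (2 / m * (π / 4)) := h
    _ = sin (π / (2 * m)) := by ring_nf

theorem self_le_sqrt_mul_sub_one {x : ℝ} (hx : 3 ≤ x) : x ≤ √x * (x - 1) := by
  have hsqrt : √x ≤ x - 1 := Real.sqrt_le_iff.mpr ⟨by linarith, by nlinarith⟩
  calc x = √x * √x := (Real.mul_self_sqrt (by linarith)).symm
    _ ≤ √x * (x - 1) := by gcongr

theorem exists_unit_vector_functionals_large_general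
    (n m : ℕ) (hn : 2 ≤ n)
    (X : Type*) [NormedAddCommGroup X] [NormedSpace ℝ X] [FiniteDimensional ℝ X]
    (hdim : Module.finrank ℝ X = n)
    (f : Fin m → (X →L[ℝ] ℝ)) :
    ∃ y : X, ‖y‖ = 1 ∧
      ∀ i, |f i y| ≥ ‖f i‖ / (Real.sqrt n * ((n : ℝ) - 1) * m) := by
  have : Nontrivial X := Module.nontrivial_of_finrank_pos (by rw [hdim]; omega)
  suffices h : HasCommonNormingVector X (Fin m) (√n * ((n : ℝ) - 1) * m)⁻¹ by
    obtain ⟨y, hy, hfy⟩ := h f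
    exact ⟨y, hy, fun i => by rw [ge_iff_le, div_eq_inv_mul]; exact hfy i⟩
  have hn' : (2 : ℝ) ≤ n := by exact_mod_cast hn
  rcases le_or_gt m 1 with hm | hm
  · have : Subsingleton (Fin m) := Fin.subsingleton_iff_le_one.mpr hm
    refine HasCommonNormingVector.of_subsingleton ?_
    interval_cases m
    · simp
    · have h1 : 1 < √(n : ℝ) := by rw [Real.lt_sqrt zero_le_one]; linarith
      rw [Nat.cast_one, mul_one]
      exact inv_lt_one_of_one_lt₀ (one_lt_mul_of_lt_of_le h1 (by linarith))
  rcases hn.eq_or_lt with rfl | hn₃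
  · have hsin := sqrt_two_div_le_sin_pi_div_two_mul hm
    refine ((Complex.hasCommonNormingVector_sin (by omega)).of_finrank_eq
      ((by positivity : (0 : ℝ) ≤ √2 / m).trans hsin) hdim Complex.finrank_real_complex).mono ?_
    calc (√((2 : ℕ) : ℝ) * (((2 : ℕ) : ℝ) - 1) * m)⁻¹ = √2 / m / 2 := by
          push_cast; field_simp; norm_num
      _ ≤ _ := by push_cast; gcongr
  · have : NeZero n := ⟨by omega⟩
    refine (hasCommonNormingVector_one_div_card.of_finrank_eq (by positivity) hdim
      finrank_euclideanSpace_fin).mono ?_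
    have hn₃' := self_le_sqrt_mul_sub_one (x := n) (by exact_mod_cast hn₃)
    rw [Fintype.card_fin, div_div, one_div]
    exact inv_anti₀ (by positivity) (by nlinarith)

/-- Lemma 3.2: for an arbitrary norm on an `n`-dimensional space and nonzero functionals
`f₁, …, f_m`, there is a unit vector `y` with `|fᵢ(y)| ≥ ‖fᵢ‖ / (√n (n-1) m)` for all `i`. -/
theorem exists_unit_vector_functionals_large
    (n m : ℕ) (hn : 2 ≤ n)
    (X : Type*) [NormedAddCommGroup X] [NormedSpace ℝ X] [FiniteDimensional ℝ X]
    (hdim : Module.finrank ℝ X = n)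
    (f : Fin m → (X →L[ℝ] ℝ)) (hf : ∀ i, f i ≠ 0) :
    ∃ y : X, ‖y‖ = 1 ∧
      ∀ i, |f i y| ≥ ‖f i‖ / (Real.sqrt n * ((n : ℝ) - 1) * m) :=
  exists_unit_vector_functionals_large_general n m hn X hdim f
end

section
/- Let x₁, …, x_m be pairwise distinct real numbers and let V be the m×m Vandermonde matrix whose i-th column is (1, x_i, x_i², …, x_i^{m-1}). Then the operator norm of V^{-1}, with respect to the supremum norm on ℝ^m, is at most max over 1 ≤ i ≤ m of the product over j ≠ i of (1 + |x_j|)/|x_j - x_i|. -/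
/-!
Write `V⁻¹` row by row: since `V` is the transposed Vandermonde matrix, the `r`-th row of `V⁻¹`
consists of the coefficients of the Lagrange basis polynomial
`ℓ_r = ∏_{j ≠ r} (X - x_j) / (x_r - x_j)`. Expanding the product, each coefficient of
`∏_{j ≠ r} (X - x_j)` is bounded in absolute value by the corresponding coefficient of
`∏_{j ≠ r} (X + |x_j|)`, whose coefficients add up to its value at `1`,
namely `∏_{j ≠ r} (1 + |x_j|)`.
-/

open Finset Polynomial Lagrange Matrix

lemma Lagrange.norm_coeff_nodal_le {R ι : Type*} [NormedCommRing R] [NormOneClass R]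
    (s : Finset ι) (a : ι → R) (k : ℕ) :
    ‖(nodal s a).coeff k‖ ≤ (∏ j ∈ s, (X + C ‖a j‖)).coeff k := by
  classical
  induction s using Finset.induction generalizing k with
  | empty => rcases k with _ | k <;> simp [coeff_one]
  | @insert i s hi ih =>
    rw [nodal_insert_eq_nodal hi, prod_insert hi, sub_mul, add_mul]
    rcases k with _ | k
    · simp only [coeff_sub, coeff_add, coeff_C_mul, coeff_X_mul_zero, zero_sub, zero_add,
        norm_neg]
      exact (norm_mul_le _ _).trans (by gcongr; exact ih 0)
    · simp only [coeff_sub, coeff_add, coeff_C_mul, coeff_X_mul]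
      calc ‖(nodal s a).coeff k - a i * (nodal s a).coeff (k + 1)‖
          ≤ ‖(nodal s a).coeff k‖ + ‖a i‖ * ‖(nodal s a).coeff (k + 1)‖ :=
            (norm_sub_le _ _).trans (by gcongr; exact norm_mul_le _ _)
        _ ≤ _ := by gcongr <;> apply ih

lemma Lagrange.sum_norm_coeff_nodal_le {R ι : Type*} [NormedCommRing R] [NormOneClass R]
    (s : Finset ι) (a : ι → R) {n : ℕ} (hn : #s < n) :
    ∑ k ∈ range n, ‖(nodal s a).coeff k‖ ≤ ∏ j ∈ s, (1 + ‖a j‖) := by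
  have hdeg : (∏ j ∈ s, (X + C ‖a j‖)).natDegree < n := by
    simp_rw [natDegree_prod_of_monic _ _ fun j _ => monic_X_add_C _, natDegree_X_add_C]
    simpa using hn
  calc ∑ k ∈ range n, ‖(nodal s a).coeff k‖
      ≤ ∑ k ∈ range n, (∏ j ∈ s, (X + C ‖a j‖ : ℝ[X])).coeff k :=
        sum_le_sum fun k _ => norm_coeff_nodal_le s a k
    _ = (∏ j ∈ s, (X + C ‖a j‖)).eval 1 := by simp [eval_eq_sum_range' hdeg]
    _ = ∏ j ∈ s, (1 + ‖a j‖) := by simp [eval_prod]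

lemma Lagrange.basis_eq_C_nodalWeight_mul_nodal_erase {F ι : Type*} [Field F] [DecidableEq ι]
    {s : Finset ι} (v : ι → F) {i : ι} (hi : i ∈ s) :
    Lagrange.basis s v i = C (nodalWeight s v i) * nodal (s.erase i) v := by
  rw [basis_eq_prod_sub_inv_mul_nodal_div hi, nodal_erase_eq_nodal_div hi]

lemma Lagrange.sum_norm_coeff_basis_le {F ι : Type*} [NormedField F] [DecidableEq ι]
    {s : Finset ι} (v : ι → F) {i : ι} (hi : i ∈ s) {n : ℕ} (hn : #s ≤ n) :
    ∑ k ∈ range n, ‖(Lagrange.basis s v i).coeff k‖ ≤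
      ∏ j ∈ s.erase i, (1 + ‖v j‖) / ‖v j - v i‖ := by
  simp only [basis_eq_C_nodalWeight_mul_nodal_erase v hi, coeff_C_mul, norm_mul, ← mul_sum]
  calc ‖nodalWeight s v i‖ * ∑ k ∈ range n, ‖(nodal (s.erase i) v).coeff k‖
      ≤ ‖nodalWeight s v i‖ * ∏ j ∈ s.erase i, (1 + ‖v j‖) := by
        gcongr; exact sum_norm_coeff_nodal_le _ _ ((card_erase_lt_of_mem hi).trans_le hn)
    _ = ∏ j ∈ s.erase i, (1 + ‖v j‖) / ‖v j - v i‖ := by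
        rw [nodalWeight, norm_prod, ← prod_mul_distrib]
        refine prod_congr rfl fun j _ => ?_
        rw [norm_inv, norm_sub_rev, inv_mul_eq_div]

lemma Matrix.inv_vandermonde_apply {F : Type*} [Field F] {n : ℕ} {v : Fin n → F}
    (hv : Function.Injective v) (i j : Fin n) :
    (vandermonde v)⁻¹ i j = (Lagrange.basis univ v j).coeff i := by
  have hvs : Set.InjOn v (univ : Finset (Fin n)) := hv.injOn
  have hdeg (j : Fin n) : (Lagrange.basis univ v j).natDegree < n := by
    rw [natDegree_basis hvs (mem_univ j), card_univ, Fintype.card_fin]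
    exact Nat.sub_one_lt_of_lt j.isLt
  suffices h : vandermonde v * of (fun i j : Fin n => (Lagrange.basis univ v j).coeff i) = 1 by
    rw [inv_eq_right_inv h, of_apply]
  ext i j
  calc (vandermonde v * of (fun i j : Fin n => (Lagrange.basis univ v j).coeff i)) i j
      = (Lagrange.basis univ v j).eval (v i) := by
        simp [mul_apply, eval_eq_sum_range' (hdeg j), mul_comm,
          Fin.sum_univ_eq_sum_range (fun k => v i ^ k * (Lagrange.basis univ v j).coeff k)]
    _ = (1 : Matrix (Fin n) (Fin n) F) i j := by
        by_cases hij : i = j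
        · subst hij; simp [eval_basis_self hvs (mem_univ i)]
        · simp [hij, eval_basis_of_ne (Ne.symm hij) (mem_univ i)]

/-- Gautschi's bound on the inverse of a Vandermonde matrix: with respect to the
supremum norm, `‖V⁻¹‖` (i.e. the maximal row sum of absolute values of entries of `V⁻¹`)
is at most `max_i ∏_{j ≠ i} (1 + |x_j|)/|x_j - x_i|`. -/
theorem vandermonde_inverse_norm_bound
    (m : ℕ) (hm : 0 < m) (x : Fin m → ℝ) (hx : Function.Injective x)
    (V : Matrix (Fin m) (Fin m) ℝ) (hV : ∀ j i, V j i = x i ^ (j : ℕ)) :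
    ∀ r : Fin m, ∑ c, |V⁻¹ r c| ≤
      univ.sup' (univ_nonempty_iff.mpr ⟨⟨0, hm⟩⟩)
        (fun i => ∏ j ∈ univ.erase i, (1 + |x j|) / |x j - x i|) := by
  intro r
  have hV_eq : V = (vandermonde x)ᵀ := by ext j i; simp [hV]
  have hrow (c : Fin m) : V⁻¹ r c = (Lagrange.basis univ x r).coeff c := by
    rw [hV_eq, ← transpose_nonsing_inv, transpose_apply, inv_vandermonde_apply hx]
  calc ∑ c, |V⁻¹ r c|
      = ∑ k ∈ range m, ‖(Lagrange.basis univ x r).coeff k‖ := by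
        simp only [hrow, Real.norm_eq_abs]
        exact Fin.sum_univ_eq_sum_range (fun k => |(Lagrange.basis univ x r).coeff k|) m
    _ ≤ ∏ j ∈ univ.erase r, (1 + |x j|) / |x j - x r| := by
        simpa only [Real.norm_eq_abs] using
          sum_norm_coeff_basis_le x (mem_univ r) (card_univ.trans (Fintype.card_fin m)).le
    _ ≤ _ := le_sup' (fun i => ∏ j ∈ univ.erase i, (1 + |x j|) / |x j - x i|) (mem_univ r)
end

section
/- For n ≥ 4, define functionals on ℝ^n by f_i(x) = x_i for 1 ≤ i ≤ n, f_{n+1}(x) = x₁ + x₂ + … + x_n, and f_{n+2}(x) = (x₁ + 2x₂ + … + n·x_n)/n. Then for every pair 0 ≤ j < k ≤ n+2 (with j, k ≥ 1), each of f_j and f_k can be written as a linear combination of the remaining n functionals {f_i : 1 ≤ i ≤ n+2, i ∉ {j,k}} with the sum of absolute values of the coefficients at most n². Consequently max{|f_j(x)|, |f_k(x)|} ≤ n²·max{|f_i(x)| : 1 ≤ i ≤ n+2, i ∉ {j,k}} for all x ∈ ℝ^n. -/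
/-!
The `n + 2` functionals satisfy two linear relations, `f_{n+1} = ∑ᵢ fᵢ` and `n f_{n+2} = ∑ᵢ i fᵢ`.
If `(λᵢ, μᵢ)` are the coefficients of `fᵢ` in them, the minors `D(i, k) = λᵢ μₖ - λₖ μᵢ` are the
coefficients of a third relation, one in which `f_k` does not occur. The minors are integers with
`|D(i, k)| ≤ n`, and `D(j, k) ≠ 0` for `j ≠ k` since the vectors `(λᵢ, μᵢ)` are pairwise
independent. Solving this relation for `f_j` expresses it through the `n` functionals other than
`f_j, f_k`, with coefficients `-D(i, k) / D(j, k)` of absolute value at most `n`.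
-/

open Finset

/-- The system of `n+2` functionals on `ℝⁿ`: `fᵢ(x) = xᵢ` for `1 ≤ i ≤ n`,
`f_{n+1}(x) = ∑ xᵢ`, `f_{n+2}(x) = (∑ i·xᵢ)/n`. -/
noncomputable def cornerFunctional (n : ℕ) (i : Fin (n + 2)) (x : Fin n → ℝ) : ℝ :=
  if h : (i : ℕ) < n then x ⟨i, h⟩
  else if (i : ℕ) = n then ∑ s, x s
  else (∑ s : Fin n, (((s : ℕ) : ℝ) + 1) * x s) / n

section LinearRelation

variable {ι E : Type*} [Fintype ι]

def IsLinearRelation (f : ι → E → ℝ) (ν : ι → ℝ) : Prop :=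
  ∀ x, ∑ i, ν i * f i x = 0

variable {f : ι → E → ℝ}

theorem IsLinearRelation.minor {l m : ι → ℝ} (hl : IsLinearRelation f l)
    (hm : IsLinearRelation f m) (k : ι) :
    IsLinearRelation f fun i => l i * m k - l k * m i := by
  intro x
  have h : ∑ i, (l i * m k - l k * m i) * f i x
      = m k * ∑ i, l i * f i x - l k * ∑ i, m i * f i x := by
    simp only [mul_sum, ← sum_sub_distrib]
    exact sum_congr rfl fun i _ => by ring
  rw [h, hl x, hm x]
  ring

theorem IsLinearRelation.exists_combination [DecidableEq ι] {ν : ι → ℝ}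
    (hν : IsLinearRelation f ν) {j k : ι} (hj : ν j ≠ 0) (hk : ν k = 0) {B : ℝ}
    (hB : ∑ i ∈ univ.erase j, |ν i| ≤ B * |ν j|) :
    ∃ c : ι → ℝ, c j = 0 ∧ c k = 0 ∧ (∀ x, f j x = ∑ i, c i * f i x) ∧ ∑ i, |c i| ≤ B := by
  set c : ι → ℝ := fun i => if i = j then 0 else -(ν i / ν j) with hc
  have hcj : c j = 0 := if_pos rfl
  have sum_erase_eq (g : ι → ℝ → ℝ) (hg : ∀ i, g i 0 = 0) :
      ∑ i, g i (c i) = ∑ i ∈ univ.erase j, g i (-(ν i / ν j)) := by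
    rw [← sum_erase univ (by rw [hcj, hg])]
    exact sum_congr rfl fun i hi => by simp only [hc, if_neg (ne_of_mem_erase hi)]
  refine ⟨c, hcj, ?_, fun x => ?_, ?_⟩
  · by_cases hkj : k = j
    · rwa [hkj]
    · simp [hc, hkj, hk]
  · have hsplit := add_sum_erase univ (fun i => ν i * f i x) (mem_univ j)
    rw [hν x] at hsplit
    rw [sum_erase_eq (fun i a => a * f i x) fun i => zero_mul _]
    simp only [neg_mul, div_mul_eq_mul_div, ← sum_div, sum_neg_distrib]
    field_simp
    linarith
  · rw [sum_erase_eq (fun _ => abs) fun _ => abs_zero]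
    simp only [abs_neg, abs_div, ← sum_div]
    rwa [div_le_iff₀ (abs_pos.mpr hj)]

theorem abs_le_mul_iSup_of_combination {j k l : ι} {c : ι → ℝ} (hj : c j = 0) (hk : c k = 0)
    (hl : ∀ x, f l x = ∑ i, c i * f i x) {B : ℝ} (hB : ∑ i, |c i| ≤ B) (x : E) :
    |f l x| ≤ B * ⨆ i : {i : ι // i ≠ j ∧ i ≠ k}, |f i.1 x| := by
  set M := ⨆ i : {i : ι // i ≠ j ∧ i ≠ k}, |f i.1 x|
  have hM : 0 ≤ M := Real.iSup_nonneg fun _ => abs_nonneg _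
  have hfM (i : ι) : |c i| * |f i x| ≤ |c i| * M := by
    by_cases hci : c i = 0
    · simp [hci]
    refine mul_le_mul_of_nonneg_left ?_ (abs_nonneg _)
    exact le_ciSup (f := fun i : {i : ι // i ≠ j ∧ i ≠ k} => |f i.1 x|)
      (Set.finite_range _).bddAbove ⟨i, fun h => hci (h ▸ hj), fun h => hci (h ▸ hk)⟩
  calc |f l x| = |∑ i, c i * f i x| := by rw [hl]
    _ ≤ ∑ i, |c i| * |f i x| := by
        simpa only [abs_mul] using abs_sum_le_sum_abs (fun i => c i * f i x) univ
    _ ≤ ∑ i, |c i| * M := sum_le_sum fun i _ => hfM i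
    _ ≤ B * M := by rw [← sum_mul]; exact mul_le_mul_of_nonneg_right hB hM

end LinearRelation

theorem Fin.sum_univ_castSucc_castSucc {M : Type*} [AddCommMonoid M] {n : ℕ}
    (g : Fin (n + 2) → M) :
    ∑ i, g i =
      ∑ s : Fin n, g s.castSucc.castSucc + g (Fin.last n).castSucc + g (Fin.last (n + 1)) := by
  rw [Fin.sum_univ_castSucc, Fin.sum_univ_castSucc]

namespace CornerFunctional

variable {n : ℕ}

def sumRelation (n : ℕ) (i : Fin (n + 2)) : ℝ :=
  if (i : ℕ) < n then -1 else if (i : ℕ) = n then 1 else 0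

def weightRelation (n : ℕ) (i : Fin (n + 2)) : ℝ :=
  if (i : ℕ) < n then -((i : ℕ) + 1) else if (i : ℕ) = n then 0 else n

theorem isLinearRelation_sumRelation : IsLinearRelation (cornerFunctional n) (sumRelation n) := by
  intro x
  simp [Fin.sum_univ_castSucc_castSucc, sumRelation, cornerFunctional]

theorem isLinearRelation_weightRelation (hn : n ≠ 0) :
    IsLinearRelation (cornerFunctional n) (weightRelation n) := by
  intro x
  simp only [weightRelation, cornerFunctional, Fin.sum_univ_castSucc_castSucc, mul_dite, ite_mul,
    zero_mul, mul_ite, Fin.val_castSucc, Fin.is_lt, ↓reduceDIte, ↓reduceIte, Fin.eta, Fin.val_last,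
    lt_self_iff_false, add_zero, add_lt_iff_neg_left, not_lt_zero, Nat.add_eq_left, one_ne_zero]
  rw [mul_div_cancel₀ _ (Nat.cast_ne_zero.mpr hn), ← sum_add_distrib]
  exact sum_eq_zero fun s _ => by ring

def minor (n : ℕ) (i k : Fin (n + 2)) : ℝ :=
  sumRelation n i * weightRelation n k - sumRelation n k * weightRelation n i

theorem abs_minor_le (i k : Fin (n + 2)) : |minor n i k| ≤ n := by
  have hi : (i : ℕ) < n → ((i : ℕ) : ℝ) + 1 ≤ n := fun h => by exact_mod_cast h
  have hk : (k : ℕ) < n → ((k : ℕ) : ℝ) + 1 ≤ n := fun h => by exact_mod_cast h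
  have h0 : (0 : ℝ) ≤ n := n.cast_nonneg
  unfold minor sumRelation weightRelation
  split_ifs <;> rw [abs_le] <;> constructor <;> (try have := hi ‹_›) <;> (try have := hk ‹_›) <;>
    linarith

theorem minor_swap (i k : Fin (n + 2)) : minor n k i = -minor n i k := by
  unfold minor; ring

theorem minor_self (k : Fin (n + 2)) : minor n k k = 0 := by
  unfold minor; ring

theorem one_le_abs_minor (hn : n ≠ 0) {i k : Fin (n + 2)} (h : i ≠ k) : 1 ≤ |minor n i k| := by
  wlog hlt : (i : ℕ) < k generalizing i k
  · rw [minor_swap, abs_neg]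
    exact this h.symm (by omega)
  have hik : ((i : ℕ) : ℝ) + 1 ≤ (k : ℕ) := by exact_mod_cast hlt
  have hn1 : (1 : ℝ) ≤ n := by exact_mod_cast Nat.one_le_iff_ne_zero.mpr hn
  have hi0 : (0 : ℝ) ≤ (i : ℕ) := Nat.cast_nonneg _
  unfold minor sumRelation weightRelation
  split_ifs <;> first
    | omega
    | (rw [abs_of_nonneg (by linarith)]; linarith)
    | (rw [abs_of_nonpos (by linarith)]; linarith)

theorem isLinearRelation_minor (hn : n ≠ 0) (k : Fin (n + 2)) :
    IsLinearRelation (cornerFunctional n) (minor n · k) :=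
  isLinearRelation_sumRelation.minor (isLinearRelation_weightRelation hn) k

theorem sum_erase_abs_minor_le (hn : n ≠ 0) {j k : Fin (n + 2)} (hjk : j ≠ k) :
    ∑ i ∈ univ.erase j, |minor n i k| ≤ (n : ℝ) ^ 2 * |minor n j k| := by
  have hk : k ∈ univ.erase j := mem_erase.mpr ⟨hjk.symm, mem_univ k⟩
  calc ∑ i ∈ univ.erase j, |minor n i k| = ∑ i ∈ (univ.erase j).erase k, |minor n i k| :=
        (sum_erase _ (by rw [minor_self, abs_zero])).symm
    _ ≤ ((univ.erase j).erase k).card • (n : ℝ) :=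
        sum_le_card_nsmul _ _ _ fun i _ => abs_minor_le i k
    _ = (n : ℝ) ^ 2 * 1 := by
        rw [card_erase_of_mem hk, card_erase_of_mem (mem_univ j), card_univ, Fintype.card_fin,
          nsmul_eq_mul]
        push_cast
        ring
    _ ≤ (n : ℝ) ^ 2 * |minor n j k| := by gcongr; exact one_le_abs_minor hn hjk

theorem exists_combination (hn : n ≠ 0) {j k : Fin (n + 2)} (hjk : j ≠ k) :
    ∃ c : Fin (n + 2) → ℝ, c j = 0 ∧ c k = 0 ∧
      (∀ x, cornerFunctional n j x = ∑ i, c i * cornerFunctional n i x) ∧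
      ∑ i, |c i| ≤ (n : ℝ) ^ 2 :=
  (isLinearRelation_minor hn k).exists_combination
    (abs_pos.mp (one_pos.trans_le (one_le_abs_minor hn hjk))) (minor_self k)
    (sum_erase_abs_minor_le hn hjk)

end CornerFunctional

/-- For any two of the `n+2` functionals, each can be written as a linear combination of
the remaining `n` functionals with the sum of absolute values of coefficients at most `n²`;
consequently `max{|f_j(x)|, |f_k(x)|} ≤ n² · max_{i ∉ {j,k}} |fᵢ(x)|`. -/
theorem cornerFunctional_combination_bound
    (n : ℕ) (hn : 4 ≤ n) (j k : Fin (n + 2)) (hjk : j ≠ k) :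
    ((∃ c : Fin (n + 2) → ℝ, c j = 0 ∧ c k = 0 ∧
        (∀ x, cornerFunctional n j x = ∑ i, c i * cornerFunctional n i x) ∧
        ∑ i, |c i| ≤ (n : ℝ) ^ 2) ∧
     (∃ c : Fin (n + 2) → ℝ, c j = 0 ∧ c k = 0 ∧
        (∀ x, cornerFunctional n k x = ∑ i, c i * cornerFunctional n i x) ∧
        ∑ i, |c i| ≤ (n : ℝ) ^ 2)) ∧
    ∀ x : Fin n → ℝ,
      max |cornerFunctional n j x| |cornerFunctional n k x| ≤
        (n : ℝ) ^ 2 * ⨆ i : {i : Fin (n + 2) // i ≠ j ∧ i ≠ k}, |cornerFunctional n i.1 x| := by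
  have hn0 : n ≠ 0 := by omega
  obtain ⟨c, hcj, hck, hc, hcB⟩ := CornerFunctional.exists_combination hn0 hjk
  obtain ⟨d, hdk, hdj, hd, hdB⟩ := CornerFunctional.exists_combination hn0 hjk.symm
  refine ⟨⟨⟨c, hcj, hck, hc, hcB⟩, ⟨d, hdj, hdk, hd, hdB⟩⟩, fun x => max_le ?_ ?_⟩
  · exact abs_le_mul_iSup_of_combination hcj hck hc hcB x
  · exact abs_le_mul_iSup_of_combination hdj hdk hd hdB x
end
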